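/- Let E be the elliptic curve over ℂ with affine Weierstrass equation y² = x³ + x, and let ι : E(ℂ) → E(ℂ) be the map sending the point at infinity O to O and an affine point (x, y) to (−x, i·y). If P = (x, y) is an affine point of E(ℂ) whose x-coordinate satisfies 5x² + 1 + 2i = 0, then 2•P + ι(P) = O; that is, the four affine points of E(ℂ) lying over the roots of 5x² + 1 + 2i are exactly the non-trivial points of the kernel of the isogeny [2+i] = 2·id + ι. -/

import Mathlib

open Complex

/-- The elliptic curve `y² = x³ + x` over `ℂ`. -/
noncomputable def Ecurve : WeierstrassCurve.Affine ℂ :=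
  { a₁ := 0, a₂ := 0, a₃ := 0, a₄ := 1, a₆ := 0 }

lemma Ecurve_nonsingular_neg_I_mul {x y : ℂ} (h : Ecurve.Nonsingular x y) :
    Ecurve.Nonsingular (-x) (Complex.I * y) := by
  rw [WeierstrassCurve.Affine.nonsingular_iff, WeierstrassCurve.Affine.equation_iff] at h ⊢
  obtain ⟨h1, h2⟩ := h
  simp only [Ecurve] at h1 h2 ⊢
  constructor
  · linear_combination y ^ 2 * Complex.I_sq - h1
  · rcases h2 with h2 | h2
    · left
      intro hc
      exact h2 (by linear_combination hc)
    · right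
      have hy : y ≠ 0 := fun hy0 => h2 (by rw [hy0]; ring)
      intro hc
      have h2I : (2 * Complex.I : ℂ) ≠ 0 := by simp [Complex.I_ne_zero]
      have hzero : (2 * Complex.I) * y = 0 := by linear_combination hc
      rcases mul_eq_zero.mp hzero with h0 | h0
      · exact h2I h0
      · exact hy h0

/-- Complex multiplication by `i` on `E(ℂ)`: `O ↦ O`, `(x, y) ↦ (-x, i·y)`. -/
noncomputable def iotaE : Ecurve.Point → Ecurve.Point
  | .zero => .zero
  | .some _ _ h => .some _ _ (Ecurve_nonsingular_neg_I_mul h)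

/-!
The tangent line to `E` at `P = (x, y)` has slope `λ = (3x² + 1) / (2y)`, and the condition
`5x² + 1 + 2i = 0` forces `λ² = x` and `λ · (-2x) + y = i·y`. Hence the tangent at `P` meets `E`
again at `(λ² - 2x, λ · (-2x) + y) = (-x, i·y) = ι(P)`, that is, `2•P = -ι(P)`.
-/

open WeierstrassCurve.Affine

lemma Ecurve_equation_iff (x y : ℂ) : Ecurve.Equation x y ↔ y ^ 2 = x ^ 3 + x := by
  simp [equation_iff, Ecurve]

lemma Ecurve_negY (x y : ℂ) : Ecurve.negY x y = -y := by
  simp [negY, Ecurve]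

lemma Ecurve_Y_ne_negY {x y : ℂ} (hy : y ≠ 0) : y ≠ Ecurve.negY x y := by
  rw [Ecurve_negY]
  exact fun h => hy (by linear_combination h / 2)

lemma Ecurve_slope_self {x y : ℂ} (hy : y ≠ 0) :
    Ecurve.slope x x y y = (3 * x ^ 2 + 1) / (2 * y) := by
  rw [slope_of_Y_ne rfl (Ecurve_Y_ne_negY hy), Ecurve_negY]
  simp only [Ecurve]
  ring

section RootOfDenominator

variable {x y : ℂ} (heq : y ^ 2 = x ^ 3 + x) (hx : 5 * x ^ 2 + 1 + 2 * I = 0)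
include heq hx

lemma y_ne_zero_of_root_of_denominator : y ≠ 0 := by
  rintro rfl
  have hx2 : x ^ 2 = -(1 + 2 * I) / 5 := by linear_combination hx / 5
  rcases mul_eq_zero.mp (show x * (x ^ 2 + 1) = 0 by linear_combination -heq) with h0 | h0
  · simpa [h0] using congrArg im hx
  · simpa [hx2] using congrArg im h0

lemma Ecurve_slope_self_sq_of_root_of_denominator : Ecurve.slope x x y y ^ 2 = x := by
  have hy := y_ne_zero_of_root_of_denominator heq hx
  rw [Ecurve_slope_self hy, div_pow, div_eq_iff (by simpa using hy)]
  linear_combination -4 * x * heq + (x ^ 2 + (1 - 2 * I) / 5) * hx + (4 / 5) * I_sq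

lemma Ecurve_addX_self_of_root_of_denominator :
    Ecurve.addX x x (Ecurve.slope x x y y) = -x := by
  rw [addX, show Ecurve.a₁ = 0 from rfl, show Ecurve.a₂ = 0 from rfl]
  linear_combination Ecurve_slope_self_sq_of_root_of_denominator heq hx

lemma Ecurve_negAddY_self_of_root_of_denominator :
    Ecurve.negAddY x x y (Ecurve.slope x x y y) = I * y := by
  have hy := y_ne_zero_of_root_of_denominator heq hx
  rw [negAddY, Ecurve_addX_self_of_root_of_denominator heq hx, Ecurve_slope_self hy]
  field_simp
  linear_combination (2 - 2 * I) * heq - (4 + 2 * I) * x / 5 * hx + (4 / 5) * x * I_sq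

end RootOfDenominator

/-- Affine points whose `x`-coordinate satisfies `5x² + 1 + 2i = 0` lie in the kernel
of the isogeny `[2+i] = 2·id + ι`. -/
theorem root_of_denominator_in_ker {x y : ℂ} (h : Ecurve.Nonsingular x y)
    (hx : 5 * x ^ 2 + 1 + 2 * Complex.I = 0) :
    2 • WeierstrassCurve.Affine.Point.some _ _ h + iotaE (.some _ _ h) = 0 := by
  have heq := (Ecurve_equation_iff x y).mp h.1
  have hY := Ecurve_Y_ne_negY (x := x) (y_ne_zero_of_root_of_denominator heq hx)
  rw [two_nsmul, Point.add_self_of_Y_ne' hY, neg_add_eq_zero]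
  simp only [iotaE, Point.some.injEq]
  exact ⟨Ecurve_addX_self_of_root_of_denominator heq hx,
    Ecurve_negAddY_self_of_root_of_denominator heq hx⟩
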